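/- Let M be a rank-r connected simple matroid with c(r-1)+1 elements (c ≥ 2) whose characteristic polynomial has only real roots. Let γᵢ denote the number of lines of M with exactly i points. Then Σ_{i≥3} C(i-1,2)·γᵢ ≥ c(c-1)(r-1)/2, with equality if and only if χ(M;λ) = (λ-1)(λ-c)^{r-1}. -/

import Mathlib

open Finset Polynomial

section MatroidDefs

variable {α : Type} [Fintype α] [DecidableEq α]

/-- The rank of a set `X` in a matroid `M`: the largest size of an independent subset
of `X`. -/
noncomputable def mrk (M : Matroid α) (X : Set α) : ℕ :=
  sSup {n | ∃ I, M.Indep I ∧ I ⊆ X ∧ I.ncard = n}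

/-- A matroid is simple if every pair of elements of the ground set is independent
(equivalently, it has no loops and no parallel pairs). -/
def mSimple (M : Matroid α) : Prop :=
  ∀ e f, e ∈ M.E → f ∈ M.E → M.Indep {e, f}

/-- The characteristic polynomial of a matroid on the ground set `α`, via the Whitney
rank expansion `χ(M;λ) = Σ_{A ⊆ E} (-1)^{|A|} λ^{r(E) - r(A)}` (which agrees with the
Möbius-function definition for loopless matroids). -/
noncomputable def charPoly (M : Matroid α) : Polynomial ℤ :=
  ∑ A : Finset α, C ((-1 : ℤ) ^ A.card) * X ^ (mrk M Set.univ - mrk M (A : Set α))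

/-- The number of lines (rank-2 flats) of `M` with exactly `k` points. -/
noncomputable def lineCount (M : Matroid α) (k : ℕ) : ℕ :=
  Nat.card {F : Set α | M.IsFlat F ∧ mrk M F = 2 ∧ F.ncard = k}

/-- Every line (rank-2 flat) of `M` has at most 3 points. -/
def linesAtMost3 (M : Matroid α) : Prop :=
  ∀ F : Set α, M.IsFlat F → mrk M F = 2 → F.ncard ≤ 3

/-- An integer polynomial has only real roots. -/
def onlyRealRoots (p : Polynomial ℤ) : Prop :=
  (p.map (Int.castRingHom ℝ)).Splits

/-- An integer polynomial has only integral roots: every complex root is an integer. -/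
def onlyIntegerRoots (p : Polynomial ℤ) : Prop :=
  ∀ z ∈ (p.map (Int.castRingHom ℂ)).roots, ∃ k : ℤ, z = (k : ℂ)

/-- A matroid is connected if no proper nonempty subset of the ground set gives an
additive separation of the rank. -/
def mConnected (M : Matroid α) : Prop :=
  M.E.Nonempty ∧ ∀ A : Set α, A ⊆ M.E → A.Nonempty → (M.E \ A).Nonempty →
    mrk M A + mrk M (M.E \ A) ≠ mrk M M.E

/-- A flat `X` of `M` is modular if every line `L` with
`rank(X ∨ L) = rank(X) + 1` meets `X`. -/
def modularFlat (M : Matroid α) (Y : Set α) : Prop :=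
  M.IsFlat Y ∧ ∀ L : Set α, M.IsFlat L → mrk M L = 2 →
    mrk M (Y ∪ L) = mrk M Y + 1 → (Y ∩ L).Nonempty

end MatroidDefs

/-!
Expanding `χ(M;λ) = Σ_A (-1)^|A| λ^(r - r(A))` by rank, the sets of rank `≤ 1` of a simple
matroid on `n` points give the coefficients `1` and `-n` of `λ^r` and `λ^(r-1)`, while the sets of
rank 2 are the subsets of size `≥ 2` of the lines, so the coefficient of `λ^(r-2)` is
`C(n,2) - S` with `S = Σ_L C(|L|-1, 2) = Σ_{i≥3} C(i-1,2) γᵢ`. When `χ(M;λ)` has only real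
roots, one of them is `1` (as `χ(M;1) = 0`), and by Vieta and `n = c(r-1) + 1` the other roots
`x₂, …, x_r` satisfy `Σ (xᵢ - c)² = 2S - c(c-1)(r-1)`. This sum of squares is nonnegative, and it
vanishes exactly when `χ(M;λ) = (λ-1)(λ-c)^(r-1)`.
-/

namespace Finset

variable {ι : Type*}

lemma sum_powersetCard_neg_one_pow_card (k : ℕ) (s : Finset ι) :
    ∑ A ∈ s.powersetCard k, (-1 : ℤ) ^ #A = (-1) ^ k * (#s).choose k := by
  rw [sum_congr rfl fun A hA => by rw [(mem_powersetCard.1 hA).2], sum_const, card_powersetCard,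
    nsmul_eq_mul, mul_comm]

lemma sum_powerset_filter_two_le_card_neg_one_pow {s : Finset ι} (hs : s.Nonempty) :
    ∑ A ∈ s.powerset with 2 ≤ #A, (-1 : ℤ) ^ #A = #s - 1 := by
  classical
  have hsmall : {A ∈ s.powerset | ¬ 2 ≤ #A} = s.powersetCard 0 ∪ s.powersetCard 1 := by
    ext A
    simp only [mem_filter, mem_powerset, mem_union, mem_powersetCard, ← and_or_left]
    exact and_congr_right fun _ => by omega
  have h := sum_filter_add_sum_filter_not s.powerset (2 ≤ #·) fun A => (-1 : ℤ) ^ #A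
  rw [sum_powerset_neg_one_pow_card_of_nonempty hs, hsmall,
    sum_union (s.pairwise_disjoint_powersetCard zero_ne_one), sum_powersetCard_neg_one_pow_card,
    sum_powersetCard_neg_one_pow_card] at h
  simp only [pow_zero, Nat.choose_zero_right, pow_one, Nat.choose_one_right] at h
  push_cast at h
  linarith

end Finset

namespace Multiset

lemma esymm_cons_two {R : Type*} [CommSemiring R] (a : R) (s : Multiset R) :
    (a ::ₘ s).esymm 2 = a * s.sum + s.esymm 2 := by
  simp only [esymm, powersetCard_cons, powersetCard_one, map_add, sum_add, map_map,
    Function.comp_def, prod_cons, prod_singleton]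
  rw [sum_map_mul_left, map_id', add_comm]

lemma sq_sum_eq_sum_map_sq_add_two_mul_esymm_two {R : Type*} [CommSemiring R] (s : Multiset R) :
    s.sum ^ 2 = (s.map (· ^ 2)).sum + 2 * s.esymm 2 := by
  induction s using Multiset.induction_on with
  | empty => simp [esymm, powersetCard_zero_right 1]
  | cons a s ih => rw [sum_cons, map_cons, sum_cons, esymm_cons_two, add_sq, ih]; ring

lemma sum_map_sub_sq {R : Type*} [CommRing R] (s : Multiset R) (c : R) :
    (s.map fun x => (x - c) ^ 2).sum =
      (s.map (· ^ 2)).sum - 2 * c * s.sum + card s * c ^ 2 := by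
  induction s using Multiset.induction_on with
  | empty => simp
  | cons a s ih => simp only [map_cons, sum_cons, card_cons, ih]; push_cast; ring

lemma sum_map_eq_zero_iff_of_nonneg {ι R : Type*} [AddCommMonoid R] [PartialOrder R]
    [IsOrderedAddMonoid R] {s : Multiset ι} {f : ι → R} (hf : ∀ x ∈ s, 0 ≤ f x) :
    (s.map f).sum = 0 ↔ ∀ x ∈ s, f x = 0 := by
  induction s using Multiset.induction_on with
  | empty => simp
  | cons a s ih =>
    have hs : ∀ x ∈ s, 0 ≤ f x := fun x hx => hf x (mem_cons_of_mem hx)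
    rw [map_cons, sum_cons, add_eq_zero_iff_of_nonneg (hf a (mem_cons_self a s))
      (sum_nonneg fun y hy => by obtain ⟨x, hx, rfl⟩ := mem_map.1 hy; exact hs x hx),
      ih hs, forall_mem_cons]

lemma sum_map_sub_sq_eq_zero_iff {R : Type*} [CommRing R] [LinearOrder R] [IsStrictOrderedRing R]
    (s : Multiset R) (c : R) : (s.map fun x => (x - c) ^ 2).sum = 0 ↔ ∀ x ∈ s, x = c := by
  rw [sum_map_eq_zero_iff_of_nonneg fun x _ => sq_nonneg (x - c)]
  simp only [sq_eq_zero_iff, sub_eq_zero]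

end Multiset

namespace Polynomial

variable {F : Type*} [Field F] {p : F[X]}

lemma Splits.sum_roots_sq_of_monic (hs : p.Splits) (hm : p.Monic) (h2 : 2 ≤ p.natDegree) :
    (p.roots.map (· ^ 2)).sum = p.nextCoeff ^ 2 - 2 * p.coeff (p.natDegree - 2) := by
  rw [hs.nextCoeff_eq_neg_sum_roots_of_monic hm, coeff_eq_esymm_roots_of_splits hs (by omega),
    Nat.sub_sub_self h2, hm.leadingCoeff, neg_sq,
    Multiset.sq_sum_eq_sum_map_sq_add_two_mul_esymm_two]
  ring

lemma Splits.sum_sq_sub_roots_erase_of_monic [DecidableEq F] (hs : p.Splits) (hm : p.Monic)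
    (h2 : 2 ≤ p.natDegree) {a : F} (ha : a ∈ p.roots) (c : F) :
    ((p.roots.erase a).map fun x => (x - c) ^ 2).sum =
      p.coeff (p.natDegree - 1) ^ 2 - 2 * p.coeff (p.natDegree - 2) +
        2 * c * p.coeff (p.natDegree - 1) + p.natDegree * c ^ 2 - (a - c) ^ 2 := by
  have hcons : (p.roots.map fun x => (x - c) ^ 2).sum =
      (a - c) ^ 2 + ((p.roots.erase a).map fun x => (x - c) ^ 2).sum := by
    conv_lhs => rw [← Multiset.cons_erase ha]
    rw [Multiset.map_cons, Multiset.sum_cons]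
  rw [Multiset.sum_map_sub_sq, hs.sum_roots_sq_of_monic hm h2, splits_iff_card_roots.1 hs] at hcons
  rw [← nextCoeff_of_natDegree_pos (by omega)]
  linear_combination -2 * c * hs.nextCoeff_eq_neg_sum_roots_of_monic hm - hcons

lemma Splits.eq_X_sub_C_mul_X_sub_C_pow_iff [DecidableEq F] (hs : p.Splits) (hm : p.Monic) {a : F}
    (ha : a ∈ p.roots) (c : F) :
    p = (X - C a) * (X - C c) ^ (p.natDegree - 1) ↔ ∀ x ∈ p.roots.erase a, x = c := by
  have hcard : Multiset.card (p.roots.erase a) = p.natDegree - 1 := by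
    rw [Multiset.card_erase_of_mem ha, ← splits_iff_card_roots.1 hs, Nat.pred_eq_sub_one]
  rw [← Multiset.eq_replicate_card, hcard]
  constructor
  · intro h
    have hroots : p.roots = a ::ₘ Multiset.replicate (p.natDegree - 1) c := by
      conv_lhs => rw [h]
      rw [roots_mul (by rw [← h]; exact hm.ne_zero), roots_X_sub_C, roots_pow, roots_X_sub_C,
        Multiset.nsmul_singleton, Multiset.singleton_add]
    rw [hroots, Multiset.erase_cons_head]
  · intro h
    conv_lhs => rw [hs.eq_prod_roots_of_monic hm, ← Multiset.cons_erase ha, h]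
    rw [Multiset.map_cons, Multiset.prod_cons, Multiset.map_replicate, Multiset.prod_replicate]

end Polynomial

section Rank

variable {α : Type} [Finite α] {M : Matroid α} {X Y F I : Set α}

lemma cast_mrk (M : Matroid α) (X : Set α) : (mrk M X : ℕ∞) = M.eRk X := by
  obtain ⟨I, hI⟩ := M.exists_isBasis' X
  have hmax : IsGreatest {n | ∃ J, M.Indep J ∧ J ⊆ X ∧ J.ncard = n} I.ncard := by
    refine ⟨⟨I, hI.indep, hI.subset, rfl⟩, ?_⟩
    rintro _ ⟨J, hJ, hJX, rfl⟩
    have h := hJ.encard_le_eRk_of_subset hJX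
    rw [hI.eRk_eq_encard, ← J.toFinite.cast_ncard_eq, ← I.toFinite.cast_ncard_eq] at h
    exact_mod_cast h
  rw [mrk, hmax.csSup_eq, hI.eRk_eq_encard, I.toFinite.cast_ncard_eq]

lemma mrk_mono (h : X ⊆ Y) : mrk M X ≤ mrk M Y := by
  have := M.eRk_mono h
  rwa [← cast_mrk, ← cast_mrk, Nat.cast_le] at this

lemma mrk_le_ncard (M : Matroid α) (X : Set α) : mrk M X ≤ X.ncard := by
  have := M.eRk_le_encard X
  rwa [← cast_mrk, ← X.toFinite.cast_ncard_eq, Nat.cast_le] at this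

lemma mrk_closure (M : Matroid α) (X : Set α) : mrk M (M.closure X) = mrk M X := by
  exact_mod_cast (cast_mrk M _).trans ((M.eRk_closure_eq X).trans (cast_mrk M X).symm)

lemma Matroid.Indep.mrk_eq_ncard (hI : M.Indep I) : mrk M I = I.ncard := by
  have := hI.eRk_eq_encard
  rwa [← cast_mrk, ← I.toFinite.cast_ncard_eq, Nat.cast_inj] at this

lemma Matroid.IsFlat.eq_closure_of_subset_of_mrk_eq (hF : M.IsFlat F) (hXF : X ⊆ F)
    (h : mrk M X = mrk M F) : F = M.closure X := by
  have hle : M.eRk F ≤ M.eRk X := by rw [← cast_mrk, ← cast_mrk, h]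
  rw [(M.isRkFinite_set X).closure_eq_closure_of_subset_of_eRk_ge_eRk hXF hle, hF.closure]

lemma Matroid.IsFlat.closure_eq_iff_subset (hF : M.IsFlat F) (hX : X ⊆ M.E)
    (h : mrk M X = mrk M F) : M.closure X = F ↔ X ⊆ F :=
  ⟨fun hXF => hXF ▸ M.subset_closure X hX,
    fun hXF => (hF.eq_closure_of_subset_of_mrk_eq hXF h).symm⟩

end Rank

section Simple

variable {α : Type} [Finite α] {M : Matroid α}

lemma mrk_eq_ncard_of_ncard_le_two (hE : M.E = Set.univ) (hM : mSimple M) {X : Set α}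
    (hX : X.ncard ≤ 2) : mrk M X = X.ncard := by
  refine Matroid.Indep.mrk_eq_ncard ?_
  have hmem : ∀ e, e ∈ M.E := fun e => hE ▸ Set.mem_univ e
  interval_cases h : X.ncard
  · rw [(Set.ncard_eq_zero X.toFinite).1 h]
    exact M.empty_indep
  · obtain ⟨a, rfl⟩ := Set.ncard_eq_one.1 h
    simpa using hM a a (hmem a) (hmem a)
  · obtain ⟨a, b, -, rfl⟩ := Set.ncard_eq_two.1 h
    exact hM a b (hmem a) (hmem b)

lemma min_ncard_two_le_mrk (hE : M.E = Set.univ) (hM : mSimple M) (X : Set α) :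
    min X.ncard 2 ≤ mrk M X := by
  obtain ⟨Y, hYX, hY⟩ := Set.exists_subset_card_eq (min_le_left X.ncard 2)
  calc min X.ncard 2 = mrk M Y := by
        rw [mrk_eq_ncard_of_ncard_le_two hE hM (hY ▸ min_le_right _ _), hY]
    _ ≤ mrk M X := mrk_mono hYX

lemma mrk_eq_iff_ncard_eq_of_lt_two (hE : M.E = Set.univ) (hM : mSimple M) (X : Set α) {k : ℕ}
    (hk : k < 2) : mrk M X = k ↔ X.ncard = k := by
  have := min_ncard_two_le_mrk hE hM X
  have := mrk_le_ncard M X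
  omega

end Simple

section CharPoly

variable {α : Type} [Fintype α] {M : Matroid α}

lemma charPoly_coeff_rank_sub {k : ℕ} (hk : k ≤ mrk M Set.univ) :
    (charPoly M).coeff (mrk M Set.univ - k) =
      ∑ A : Finset α, if mrk M A = k then (-1 : ℤ) ^ #A else 0 := by
  rw [charPoly, finsetSum_coeff]
  refine Finset.sum_congr rfl fun A _ => ?_
  have := mrk_mono (M := M) (Set.subset_univ (A : Set α))
  rw [coeff_C_mul, coeff_X_pow, mul_ite, mul_one, mul_zero]
  exact if_congr (by omega) rfl rfl

lemma natDegree_charPoly_le (M : Matroid α) : (charPoly M).natDegree ≤ mrk M Set.univ :=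
  natDegree_sum_le_of_forall_le _ _ fun _ _ =>
    (natDegree_C_mul_le _ _).trans (natDegree_X_pow_le _) |>.trans (Nat.sub_le _ _)

lemma charPoly_coeff_rank_sub_of_lt_two (hE : M.E = Set.univ) (hM : mSimple M) {k : ℕ}
    (hk : k < 2) (hkr : k ≤ mrk M Set.univ) :
    (charPoly M).coeff (mrk M Set.univ - k) = (-1) ^ k * (Fintype.card α).choose k := by
  classical
  simp_rw [charPoly_coeff_rank_sub hkr, mrk_eq_iff_ncard_eq_of_lt_two hE hM _ hk,
    Set.ncard_coe_finset, ← Finset.sum_filter, ← Finset.powerset_univ, ← powersetCard_eq_filter,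
    sum_powersetCard_neg_one_pow_card, card_univ]

lemma charPoly_coeff_rank (hE : M.E = Set.univ) (hM : mSimple M) :
    (charPoly M).coeff (mrk M Set.univ) = 1 := by
  simpa using charPoly_coeff_rank_sub_of_lt_two hE hM zero_lt_two (Nat.zero_le _)

lemma natDegree_charPoly (hE : M.E = Set.univ) (hM : mSimple M) :
    (charPoly M).natDegree = mrk M Set.univ :=
  (natDegree_charPoly_le M).antisymm
    (le_natDegree_of_ne_zero ((charPoly_coeff_rank hE hM).symm ▸ one_ne_zero))

lemma charPoly_monic (hE : M.E = Set.univ) (hM : mSimple M) : (charPoly M).Monic := by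
  rw [Monic, leadingCoeff, natDegree_charPoly hE hM, charPoly_coeff_rank hE hM]

lemma charPoly_eval_one [Nonempty α] (M : Matroid α) : (charPoly M).eval 1 = 0 := by
  simp only [charPoly, eval_finsetSum, eval_mul, eval_C, eval_pow, eval_X, one_pow, mul_one]
  rw [← Finset.powerset_univ, sum_powerset_neg_one_pow_card_of_nonempty univ_nonempty]

end CharPoly

section Lines

variable {α : Type} [Fintype α] {M : Matroid α}

open scoped Classical in
noncomputable def lines (M : Matroid α) : Finset (Finset α) :=
  {L | M.IsFlat L ∧ mrk M L = 2}

lemma mem_lines {L : Finset α} : L ∈ lines M ↔ M.IsFlat L ∧ mrk M L = 2 := by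
  classical
  simp [lines]

lemma two_le_card_of_mem_lines {L : Finset α} (hL : L ∈ lines M) : 2 ≤ #L := by
  simpa [(mem_lines.1 hL).2] using mrk_le_ncard M L

open scoped Classical in
lemma lineCount_eq_card_filter (M : Matroid α) (k : ℕ) :
    lineCount M k = #{L ∈ lines M | #L = k} := by
  rw [lineCount, Nat.card_coe_set_eq, ← Set.ncard_coe_finset, coe_filter,
    ← Set.ncard_image_of_injective _ coe_injective]
  congr 1
  ext F
  simp only [Set.mem_image, mem_lines]
  constructor
  · rintro ⟨hF, h2, hk⟩
    refine ⟨F.toFinset, ⟨⟨by simpa using hF, by simpa using h2⟩, ?_⟩, by simp⟩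
    rw [← Set.ncard_eq_toFinset_card', hk]
  · rintro ⟨L, ⟨⟨hF, h2⟩, hk⟩, rfl⟩
    exact ⟨hF, h2, by rw [Set.ncard_coe_finset, hk]⟩

lemma mrk_eq_two_of_subset_mem_lines (hE : M.E = Set.univ) (hM : mSimple M) {A L : Finset α}
    (hL : L ∈ lines M) (hAL : A ⊆ L) (hA : 2 ≤ #A) : mrk M A = 2 := by
  have := min_ncard_two_le_mrk hE hM A
  have := mrk_mono (M := M) (coe_subset.2 hAL)
  rw [Set.ncard_coe_finset, (mem_lines.1 hL).2] at *
  omega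

lemma mrk_eq_two_and_closure_eq_iff (hE : M.E = Set.univ) (hM : mSimple M) {A L : Finset α}
    (hL : L ∈ lines M) : mrk M A = 2 ∧ M.closure A = L ↔ A ⊆ L ∧ 2 ≤ #A := by
  obtain ⟨hLflat, hLrk⟩ := mem_lines.1 hL
  have hAE : (A : Set α) ⊆ M.E := hE ▸ Set.subset_univ _
  constructor
  · rintro ⟨hA, hAL⟩
    refine ⟨coe_subset.1 ((hLflat.closure_eq_iff_subset hAE (by rw [hA, hLrk])).1 hAL), ?_⟩
    simpa [hA] using mrk_le_ncard M A
  · rintro ⟨hAL, hA⟩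
    have h2 := mrk_eq_two_of_subset_mem_lines hE hM hL hAL hA
    exact ⟨h2, (hLflat.closure_eq_iff_subset hAE (by rw [h2, hLrk])).2 (coe_subset.2 hAL)⟩

lemma sum_filter_mrk_eq_two {β : Type*} [AddCommMonoid β] (hE : M.E = Set.univ) (hM : mSimple M)
    (f : Finset α → β) :
    ∑ A ∈ univ.filter fun A : Finset α => mrk M A = 2, f A =
      ∑ L ∈ lines M, ∑ A ∈ L.powerset with 2 ≤ #A, f A := by
  classical
  have hmaps : ∀ A ∈ univ.filter fun A : Finset α => mrk M A = 2,
      (M.closure A).toFinset ∈ lines M := by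
    intro A hA
    rw [mem_lines, Set.coe_toFinset, mrk_closure, (mem_filter.1 hA).2]
    exact ⟨M.isFlat_closure A, rfl⟩
  rw [← sum_fiberwise_of_maps_to hmaps]
  refine sum_congr rfl fun L hL => sum_congr ?_ fun _ _ => rfl
  ext A
  simp only [mem_filter, mem_univ, true_and, mem_powerset, ← coe_inj (s₂ := L), Set.coe_toFinset,
    mrk_eq_two_and_closure_eq_iff hE hM hL]

end Lines

section SecondCoefficient

variable {α : Type} [Fintype α] {M : Matroid α}

lemma sum_neg_one_pow_filter_mrk_eq_two (hE : M.E = Set.univ) (hM : mSimple M) :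
    ∑ A ∈ univ.filter fun A : Finset α => mrk M A = 2, (-1 : ℤ) ^ #A =
      ∑ L ∈ lines M, ((#L : ℤ) - 1) :=
  (sum_filter_mrk_eq_two hE hM _).trans <| sum_congr rfl fun _ hL =>
    sum_powerset_filter_two_le_card_neg_one_pow
      (card_pos.1 (zero_lt_two.trans_le (two_le_card_of_mem_lines hL)))

lemma choose_card_two_eq_sum_lines (hE : M.E = Set.univ) (hM : mSimple M) :
    (Fintype.card α).choose 2 = ∑ L ∈ lines M, (#L).choose 2 := by
  have h := sum_filter_mrk_eq_two hE hM fun A => if #A = 2 then 1 else 0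
  simp only [sum_boole, filter_filter, Nat.cast_id] at h
  have hpairs : univ.filter (fun A : Finset α => mrk M A = 2 ∧ #A = 2) = powersetCard 2 univ := by
    ext A
    simp only [mem_filter, mem_univ, true_and, mem_powersetCard_univ, and_iff_right_iff_imp]
    intro hA
    rw [mrk_eq_ncard_of_ncard_le_two hE hM (by simp [hA]), Set.ncard_coe_finset, hA]
  rw [hpairs, card_powersetCard, card_univ] at h
  rw [h]
  refine sum_congr rfl fun L _ => ?_
  rw [← card_powersetCard, powersetCard_eq_filter]
  congr 1
  exact filter_congr fun A _ => by omega

lemma charPoly_coeff_rank_sub_two (hE : M.E = Set.univ) (hM : mSimple M)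
    (h2 : 2 ≤ mrk M Set.univ) :
    (charPoly M).coeff (mrk M Set.univ - 2) =
      (Fintype.card α).choose 2 - ∑ L ∈ lines M, ((#L - 1).choose 2 : ℤ) := by
  rw [charPoly_coeff_rank_sub h2, ← sum_filter, sum_neg_one_pow_filter_mrk_eq_two hE hM,
    choose_card_two_eq_sum_lines hE hM, Nat.cast_sum, eq_sub_iff_add_eq, ← sum_add_distrib]
  refine sum_congr rfl fun L hL => ?_
  obtain ⟨m, hm⟩ : ∃ m, #L = m + 1 + 1 := ⟨#L - 2, by have := two_le_card_of_mem_lines hL; omega⟩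
  have hpascal : (m + 1 + 1).choose 2 = (m + 1) + (m + 1).choose 2 := by
    simpa using Nat.choose_succ_succ' (m + 1) 1
  rw [hm, Nat.add_sub_cancel, hpascal]
  push_cast
  ring

lemma sum_choose_mul_lineCount (M : Matroid α) :
    ∑ i ∈ Icc 3 (Fintype.card α), (i - 1).choose 2 * lineCount M i =
      ∑ L ∈ lines M, (#L - 1).choose 2 := by
  classical
  have hmaps : ∀ L ∈ {L ∈ lines M | 3 ≤ #L}, #L ∈ Icc 3 (Fintype.card α) :=
    fun L hL => mem_Icc.2 ⟨(mem_filter.1 hL).2, card_le_univ L⟩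
  have hfilter : ∑ L ∈ lines M with 3 ≤ #L, (#L - 1).choose 2 =
      ∑ L ∈ lines M, (#L - 1).choose 2 :=
    sum_filter_of_ne fun L _ h => by contrapose! h; exact Nat.choose_eq_zero_of_lt (by omega)
  rw [← hfilter, ← sum_fiberwise_of_maps_to hmaps]
  refine sum_congr rfl fun i hi => ?_
  rw [lineCount_eq_card_filter, filter_filter, mul_comm, ← smul_eq_mul, ← sum_const]
  have := (mem_Icc.1 hi).1
  exact sum_congr (filter_congr fun L _ => by omega) fun L hL => by rw [(mem_filter.1 hL).2.2]

end SecondCoefficient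

section RealRooted

variable {α : Type} [Fintype α] {M : Matroid α}

lemma one_mem_roots_charPoly [Nonempty α] (hE : M.E = Set.univ) (hM : mSimple M) :
    (1 : ℝ) ∈ ((charPoly M).map (Int.castRingHom ℝ)).roots := by
  rw [mem_roots ((charPoly_monic hE hM).map _).ne_zero, IsRoot, eval_one_map, charPoly_eval_one,
    map_zero]

lemma sum_sq_sub_roots_erase_one_charPoly (hE : M.E = Set.univ) (hM : mSimple M) {c : ℕ}
    (hc : 1 ≤ c) (hcard : Fintype.card α = c * (mrk M Set.univ - 1) + 1)
    (hreal : onlyRealRoots (charPoly M)) :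
    ((((charPoly M).map (Int.castRingHom ℝ)).roots.erase 1).map fun x : ℝ => (x - c) ^ 2).sum =
      2 * ((∑ L ∈ lines M, (#L - 1).choose 2 : ℕ) : ℝ) -
        ((c * (c - 1) * (mrk M Set.univ - 1) : ℕ) : ℝ) := by
  have : Nonempty α := Fintype.card_pos_iff.1 (by omega)
  have hm := charPoly_monic hE hM
  have hdeg : ((charPoly M).map (Int.castRingHom ℝ)).natDegree = mrk M Set.univ := by
    rw [hm.natDegree_map, natDegree_charPoly hE hM]
  have h1 := one_mem_roots_charPoly hE hM
  have hr1 : 1 ≤ mrk M Set.univ := by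
    have := min_ncard_two_le_mrk hE hM Set.univ
    rw [Set.ncard_univ, Nat.card_eq_fintype_card] at this
    omega
  rcases hr1.eq_or_lt with hr1 | hr2
  · have herase : (((charPoly M).map (Int.castRingHom ℝ)).roots.erase 1) = 0 := by
      rw [← Multiset.card_eq_zero, Multiset.card_erase_of_mem h1,
        splits_iff_card_roots.1 hreal, hdeg, ← hr1]
      rfl
    have hlines : lines M = ∅ := eq_empty_of_forall_notMem fun L hL => by
      have := two_le_card_of_mem_lines hL
      have := card_le_univ L
      rw [← hr1] at hcard
      omega
    simp [herase, hlines, ← hr1]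
  · rw [hreal.sum_sq_sub_roots_erase_of_monic (hm.map _) (hdeg ▸ hr2) h1, hdeg, coeff_map,
      coeff_map, charPoly_coeff_rank_sub_of_lt_two hE hM one_lt_two hr2.le,
      charPoly_coeff_rank_sub_two hE hM hr2]
    push_cast [eq_intCast, Nat.choose_one_right, Nat.cast_choose_two, hcard, Nat.cast_sub hc,
      Nat.cast_sub hr1]
    ring

lemma charPoly_eq_iff_forall_mem_roots_erase_one [Nonempty α] (hE : M.E = Set.univ)
    (hM : mSimple M) (hreal : onlyRealRoots (charPoly M)) {c : ℤ} :
    charPoly M = (X - C 1) * (X - C c) ^ (mrk M Set.univ - 1) ↔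
      ∀ x ∈ ((charPoly M).map (Int.castRingHom ℝ)).roots.erase 1, x = c := by
  have hm := charPoly_monic hE hM
  rw [← hreal.eq_X_sub_C_mul_X_sub_C_pow_iff (hm.map _) (one_mem_roots_charPoly hE hM),
    hm.natDegree_map, natDegree_charPoly hE hM,
    ← (map_injective _ (Int.castRingHom ℝ).injective_int).eq_iff, Polynomial.map_mul,
    Polynomial.map_pow, Polynomial.map_sub, Polynomial.map_sub, map_X, map_C, map_C, map_one,
    eq_intCast]

end RealRooted

theorem stmt14_general {α : Type} [Fintype α] (M : Matroid α)
    (hE : M.E = Set.univ) (hsimple : mSimple M)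
    (r c : ℕ) (hc : 2 ≤ c) (hr : mrk M Set.univ = r)
    (hcard : Fintype.card α = c * (r - 1) + 1)
    (hreal : onlyRealRoots (charPoly M)) :
    c * (c - 1) * (r - 1) ≤
      2 * ∑ i ∈ Finset.Icc 3 (Fintype.card α), (i - 1).choose 2 * lineCount M i ∧
    (c * (c - 1) * (r - 1) =
        2 * ∑ i ∈ Finset.Icc 3 (Fintype.card α), (i - 1).choose 2 * lineCount M i ↔
      charPoly M = (X - C 1) * (X - C (c : ℤ)) ^ (r - 1)) := by
  subst hr
  have : Nonempty α := Fintype.card_pos_iff.1 (by omega)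
  have hkey := sum_sq_sub_roots_erase_one_charPoly hE hsimple (by omega) hcard hreal
  rw [sum_choose_mul_lineCount, charPoly_eq_iff_forall_mem_roots_erase_one hE hsimple hreal,
    Int.cast_natCast, ← Multiset.sum_map_sub_sq_eq_zero_iff, hkey, sub_eq_zero, eq_comm]
  refine ⟨?_, by exact_mod_cast Iff.rfl⟩
  exact_mod_cast sub_nonneg.1 <| hkey ▸ Multiset.sum_nonneg
    (Multiset.forall_mem_map_iff.2 fun x _ => sq_nonneg (x - (c : ℝ)))

/-- Let `M` be a rank-`r` connected simple matroid with `c(r-1) + 1`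
elements (`c ≥ 2`) whose characteristic polynomial has only real roots, and let `γᵢ`
denote the number of lines of `M` with exactly `i` points.  Then
`Σ_{i≥3} C(i-1,2)⬝γᵢ ≥ c(c-1)(r-1)/2` (stated multiplied by 2 to stay in the integers),
with equality if and only if `χ(M;λ) = (λ-1)(λ-c)^{r-1}`. -/
theorem stmt14 {α : Type} [Fintype α] [DecidableEq α] (M : Matroid α)
    (hE : M.E = Set.univ) (hsimple : mSimple M) (hconn : mConnected M)
    (r c : ℕ) (hc : 2 ≤ c) (hr : mrk M Set.univ = r)
    (hcard : Fintype.card α = c * (r - 1) + 1)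
    (hreal : onlyRealRoots (charPoly M)) :
    c * (c - 1) * (r - 1) ≤
      2 * ∑ i ∈ Finset.Icc 3 (Fintype.card α), (i - 1).choose 2 * lineCount M i ∧
    (c * (c - 1) * (r - 1) =
        2 * ∑ i ∈ Finset.Icc 3 (Fintype.card α), (i - 1).choose 2 * lineCount M i ↔
      charPoly M = (X - C 1) * (X - C (c : ℤ)) ^ (r - 1)) :=
  stmt14_general M hE hsimple r c hc hr hcard hreal
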